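/- (Corollary 1, case T > B_d(n_c+n_o).) Let n_l ≥ 0 be an integer, and extend the SGD process by a final block: w_{B_l}^0 = w_{B_d}^{n_p} and w_{B_l}^j = w_{B_l}^{j−1} − α∇ℓ(w_{B_l}^{j−1}, ξ^j) for 1 ≤ j ≤ n_l, where the ξ^j are independent and uniformly distributed on the full training set 𝒳, independent of all previous samples. Then E[L(w_{B_l}^{n_l})] − L(w*) ≤ α²LM/(2γc) + (1/B_d)(1 − γc)^{n_l} Σ_{l=0}^{B_d−1} (1 − γc)^{l·n_p} · (L·D²/2 − α²LM/(2γc)). -/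

import Mathlib

/-!
One SGD step on `F = F_T` with a sample drawn uniformly from `T` decreases `F` in expectation: by
the descent lemma and the second-moment bound, `E F(w⁺) ≤ F(w) - γ ‖∇F(w)‖² + α²LM/2`, and the PL
inequality turns this into a contraction by `1 - γc` of the excess `E F - F(w*) - α²LM/(2γc)`.
The expectation over the product of the uniform sample spaces is taken one coordinate at a time:
the iterate before a step does not depend on the sample drawn in that step, so resampling that
coordinate averages the step over `T`.

Since `b L̃_{b+1} = (b - 1) L̃_b + ℒ_b`, the excess of `L̃_{b+1}` at the end of block `b` is a
weighted average of the contracted excess of `L̃_b` and the excess of `ℒ_b`; the latter is at most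
`LD²/2` because `ℒ_b` is stationary at `u_b`, within distance `D`. Induction over the blocks gives
`b · excess ≤ ∑_{l<b} (1 - γc)^{l n_p} (LD²/2 - α²LM/(2γc))`, and the final `n_l` steps contract
once more by `(1 - γc)^{n_l}`.
-/

open Finset

/-- Empirical loss of `ℓ` over the finite set `S`: `F_S(w) = (1/|S|) ∑_{x ∈ S} ℓ(w, x)`. -/
noncomputable def empLoss {H 𝒟 : Type*} (ℓ : H → 𝒟 → ℝ) (S : Finset 𝒟) (w : H) : ℝ :=
  (S.card : ℝ)⁻¹ * ∑ x ∈ S, ℓ w x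

/-- `X̃_b = 𝒳_1 ∪ ⋯ ∪ 𝒳_{b-1}`, the samples available at the edge node at block `b`. -/
def availSet {𝒟 : Type*} [DecidableEq 𝒟] (X : ℕ → Finset 𝒟) (b : ℕ) : Finset 𝒟 :=
  (Finset.Icc 1 (b - 1)).biUnion X

/-- Sample space for the pipelined SGD process: a realization assigns, to each block
`b = i + 2` with `2 ≤ b ≤ B_d` and each update index `j ∈ {1,…,n_p}`, a sample
`ξ_b^j ∈ X̃_b`; the uniform distribution on this finite type is the product of the
uniform distributions on the `X̃_b`'s (i.i.d. samples). -/
def SampleSpace {𝒟 : Type*} [DecidableEq 𝒟] (X : ℕ → Finset 𝒟) (Bd np : ℕ) : Type _ :=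
  (i : Fin (Bd - 1)) → Fin np → {x // x ∈ availSet X (i.val + 2)}

noncomputable instance {𝒟 : Type*} [DecidableEq 𝒟] (X : ℕ → Finset 𝒟) (Bd np : ℕ) :
    Fintype (SampleSpace X Bd np) := by
  unfold SampleSpace; infer_instance

/-- Expectation with respect to the uniform distribution over a finite type `Ω`. -/
noncomputable def unifExp {Ω : Type*} [Fintype Ω] (f : Ω → ℝ) : ℝ :=
  (Fintype.card Ω : ℝ)⁻¹ * ∑ ω : Ω, f ω

open scoped BigOperators Gradient InnerProductSpace

section Calculus

variable {H : Type*} [NormedAddCommGroup H] [InnerProductSpace ℝ H] [CompleteSpace H]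

theorem gradient_eq_zero_of_forall_le {f : H → ℝ} {v : H} (h : ∀ w, f v ≤ f w) : ∇ f v = 0 := by
  simp [gradient, IsLocalMin.fderiv_eq_zero (Filter.Eventually.of_forall h)]

theorem le_add_inner_gradient_add_sq_norm {f : H → ℝ} {L : ℝ} (hf : Differentiable ℝ f)
    (hlip : ∀ w u, ‖∇ f w - ∇ f u‖ ≤ L * ‖w - u‖) (v w : H) :
    f w ≤ f v + ⟪∇ f v, w - v⟫_ℝ + L / 2 * ‖w - v‖ ^ 2 := by
  set d := w - v
  let ψ : ℝ → ℝ := fun t => f (v + t • d) - t * ⟪∇ f v, d⟫_ℝ - t ^ 2 * (L / 2 * ‖d‖ ^ 2)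
  have hψ : ∀ t, HasDerivAt ψ (⟪∇ f (v + t • d) - ∇ f v, d⟫_ℝ - t * (L * ‖d‖ ^ 2)) t := by
    intro t
    have hline : HasDerivAt (fun t : ℝ => v + t • d) d t := by
      simpa using ((hasDerivAt_id t).smul_const d).const_add v
    have hf' := (hasGradientAt_iff_hasFDerivAt.mp (hf (v + t • d)).hasGradientAt).comp_hasDerivAt
      t hline
    rw [InnerProductSpace.toDual_apply_apply] at hf'
    refine ((hf'.sub ((hasDerivAt_id t).mul_const _)).sub
      ((hasDerivAt_pow 2 t).mul_const _)).congr_deriv ?_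
    rw [inner_sub_left]
    simp only [Nat.cast_ofNat]
    ring
  have hanti : AntitoneOn ψ (Set.Icc 0 1) := by
    refine antitoneOn_of_hasDerivWithinAt_nonpos (convex_Icc 0 1)
      (HasDerivAt.continuousOn fun t _ => hψ t) (fun t _ => (hψ t).hasDerivWithinAt) ?_
    intro t ht
    rw [interior_Icc] at ht
    have : ⟪∇ f (v + t • d) - ∇ f v, d⟫_ℝ ≤ t * (L * ‖d‖ ^ 2) :=
      calc ⟪∇ f (v + t • d) - ∇ f v, d⟫_ℝ ≤ ‖∇ f (v + t • d) - ∇ f v‖ * ‖d‖ :=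
            real_inner_le_norm _ _
        _ ≤ L * ‖t • d‖ * ‖d‖ := by
            gcongr
            simpa using hlip (v + t • d) v
        _ = t * (L * ‖d‖ ^ 2) := by
            rw [norm_smul, Real.norm_of_nonneg ht.1.le]
            ring
    linarith
  have h01 := hanti (Set.left_mem_Icc.2 zero_le_one) (Set.right_mem_Icc.2 zero_le_one) zero_le_one
  simp only [ψ, d, zero_smul, add_zero, one_smul, add_sub_cancel] at h01
  linarith

theorem le_add_of_gradient_eq_zero {f : H → ℝ} {L D : ℝ} (hL : 0 ≤ L) (hf : Differentiable ℝ f)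
    (hlip : ∀ w u, ‖∇ f w - ∇ f u‖ ≤ L * ‖w - u‖) {v w : H} (hv : ∇ f v = 0)
    (hD : ‖w - v‖ ≤ D) : f w ≤ f v + L * D ^ 2 / 2 := by
  have h := le_add_inner_gradient_add_sq_norm hf hlip v w
  rw [hv, inner_zero_left, add_zero] at h
  have : ‖w - v‖ ^ 2 ≤ D ^ 2 := pow_le_pow_left₀ (norm_nonneg _) hD 2
  nlinarith

theorem expect_sub_min_le_of_norm_sub_le {Ω : Type*} [Fintype Ω] [Nonempty Ω] {f : H → ℝ} {L D : ℝ}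
    (hL : 0 ≤ L) (hf : Differentiable ℝ f) (hlip : ∀ w u, ‖∇ f w - ∇ f u‖ ≤ L * ‖w - u‖)
    {v : H} (hv : ∀ w, f v ≤ f w) (w : Ω → H) (hD : ∀ ω, ‖w ω - v‖ ≤ D) :
    𝔼 ω, f (w ω) - f v ≤ L * D ^ 2 / 2 := by
  rw [sub_le_iff_le_add']
  exact Finset.expect_le Finset.univ_nonempty fun ω _ =>
    le_add_of_gradient_eq_zero hL hf hlip (gradient_eq_zero_of_forall_le hv) (hD ω)

end Calculus

section EmpiricalLoss

variable {H 𝒟 : Type*} [NormedAddCommGroup H] [InnerProductSpace ℝ H] [CompleteSpace H]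
  {ℓ : H → 𝒟 → ℝ}

theorem hasGradientAt_empLoss (hdiff : ∀ x, Differentiable ℝ (ℓ · x)) (S : Finset 𝒟) (w : H) :
    HasGradientAt (empLoss ℓ S) ((S.card : ℝ)⁻¹ • ∑ x ∈ S, ∇ (ℓ · x) w) w := by
  rw [hasGradientAt_iff_hasFDerivAt, map_smul, map_sum]
  exact (HasFDerivAt.fun_sum fun x _ =>
    hasGradientAt_iff_hasFDerivAt.mp (hdiff x w).hasGradientAt).const_mul _

theorem gradient_empLoss (hdiff : ∀ x, Differentiable ℝ (ℓ · x)) (S : Finset 𝒟) (w : H) :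
    ∇ (empLoss ℓ S) w = (S.card : ℝ)⁻¹ • ∑ x ∈ S, ∇ (ℓ · x) w :=
  (hasGradientAt_empLoss hdiff S w).gradient

theorem differentiable_empLoss (hdiff : ∀ x, Differentiable ℝ (ℓ · x)) (S : Finset 𝒟) :
    Differentiable ℝ (empLoss ℓ S) :=
  fun w => (hasGradientAt_empLoss hdiff S w).differentiableAt

theorem norm_gradient_empLoss_sub_le {L : ℝ} (hL : 0 ≤ L) (hdiff : ∀ x, Differentiable ℝ (ℓ · x))
    (hLip : ∀ x w u, ‖∇ (ℓ · x) w - ∇ (ℓ · x) u‖ ≤ L * ‖w - u‖) (S : Finset 𝒟) (w u : H) :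
    ‖∇ (empLoss ℓ S) w - ∇ (empLoss ℓ S) u‖ ≤ L * ‖w - u‖ := by
  rcases S.eq_empty_or_nonempty with rfl | hS
  · simpa [gradient_empLoss hdiff] using mul_nonneg hL (norm_nonneg (w - u))
  rw [gradient_empLoss hdiff, gradient_empLoss hdiff, ← smul_sub, ← Finset.sum_sub_distrib,
    norm_smul, norm_inv, Real.norm_natCast, inv_mul_le_iff₀ (by simp [hS.card_pos])]
  calc ‖∑ x ∈ S, (∇ (ℓ · x) w - ∇ (ℓ · x) u)‖ ≤ ∑ x ∈ S, L * ‖w - u‖ :=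
        (norm_sum_le _ _).trans (Finset.sum_le_sum fun x _ => hLip x w u)
    _ = S.card * (L * ‖w - u‖) := by rw [Finset.sum_const, nsmul_eq_mul]

end EmpiricalLoss

theorem unifExp_eq_expect {Ω : Type*} [Fintype Ω] (f : Ω → ℝ) : unifExp f = 𝔼 ω, f ω := by
  rw [unifExp, Fintype.expect_eq_sum_div_card, inv_mul_eq_div]

theorem Finset.expect_coe_sort {ι : Type*} (s : Finset ι) (f : ι → ℝ) :
    𝔼 i : s, f i = 𝔼 i ∈ s, f i := by
  rw [Fintype.expect_eq_sum_div_card, Finset.expect_eq_sum_div_card, Finset.sum_coe_sort,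
    Fintype.card_coe]

/-- A coordinate of `Ω` with values in `β`: reading it and overwriting it (a lawful lens). -/
structure Coord (Ω β : Type*) where
  get : Ω → β
  put : Ω → β → Ω
  get_put : ∀ ω t, get (put ω t) = t
  put_put : ∀ ω s t, put (put ω s) t = put ω t
  put_get : ∀ ω, put ω (get ω) = ω

namespace Coord

attribute [simp] get_put put_put put_get

variable {Ω β γ : Type*}

def pi {ι : Type*} [DecidableEq ι] {β : ι → Type*} (i : ι) : Coord ((i : ι) → β i) (β i) where
  get ω := ω i
  put ω t := Function.update ω i t
  get_put := by simp
  put_put := by simp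
  put_get := by simp

def snd {α : Type*} : Coord (α × β) β where
  get := Prod.snd
  put p t := (p.1, t)
  get_put := by simp
  put_put := by simp
  put_get := by simp

def comp (κ : Coord Ω β) (κ' : Coord β γ) : Coord Ω γ where
  get ω := κ'.get (κ.get ω)
  put ω t := κ.put ω (κ'.put (κ.get ω) t)
  get_put := by simp
  put_put := by simp
  put_get := by simp

theorem expect_eq_expect_put [Fintype Ω] [Fintype β] (κ : Coord Ω β) (f : Ω → ℝ) :
    𝔼 ω, f ω = 𝔼 ω, 𝔼 t, f (κ.put ω t) := by
  cases isEmpty_or_nonempty β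
  · have : IsEmpty Ω := κ.get.isEmpty
    simp
  -- `(ω, t) ↦ (put ω t, get ω)` is an involution of `Ω × β` carrying `f (put ω t)` to `f ω`
  let e : Equiv.Perm (Ω × β) := Function.Involutive.toPerm (fun p => (κ.put p.1 p.2, κ.get p.1))
    fun p => by simp
  rw [← Finset.expect_product' Finset.univ Finset.univ (fun ω t => f (κ.put ω t)),
    Finset.univ_product_univ,
    Fintype.expect_equiv e (fun p => f (κ.put p.1 p.2)) (fun q => f q.1) fun p => rfl,
    ← Finset.univ_product_univ, Finset.expect_product]
  simp

theorem pi_comp_pi_put_of_ne {ι κ : Type*} [DecidableEq ι] [DecidableEq κ] {β : ι → Type*}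
    {i i' : ι} {j k : κ} (ω : (i : ι) → κ → β i) (t : β i) (h : i' ≠ i ∨ k ≠ j) :
    ((pi i).comp (pi j)).put ω t i' k = ω i' k := by
  by_cases hi : i' = i
  · subst hi
    simp [comp, pi, h.resolve_left (not_not.2 rfl)]
  · simp [comp, pi, Function.update_of_ne hi]

end Coord

theorem sgd_gamma_nonneg {L MG α γ : ℝ} (hα : 0 < α) (hα2 : α ≤ 2 / (L * MG))
    (hγ : γ = α * (1 - α * L * MG / 2)) : 0 ≤ γ := by
  have hLMG : 0 < L * MG := by
    by_contra! h
    linarith [div_nonpos_of_nonneg_of_nonpos zero_le_two h]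
  rw [le_div_iff₀ hLMG] at hα2
  rw [hγ]
  nlinarith

section SGD

variable {H 𝒟 : Type*} [NormedAddCommGroup H] [InnerProductSpace ℝ H] [CompleteSpace H]
  {ℓ : H → 𝒟 → ℝ}

theorem sgd_iterates_eq {α : ℝ} {n : ℕ} {w w' : ℕ → H} {ξ ξ' : Fin n → 𝒟}
    (hstep : ∀ j : Fin n, w (j + 1) = w j - α • ∇ (ℓ · (ξ j)) (w j))
    (hstep' : ∀ j : Fin n, w' (j + 1) = w' j - α • ∇ (ℓ · (ξ' j)) (w' j))
    (h0 : w 0 = w' 0) {m : ℕ} (hm : m ≤ n) (hξ : ∀ j : Fin n, j < m → ξ j = ξ' j) :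
    w m = w' m := by
  induction m with
  | zero => exact h0
  | succ m ih =>
    rw [hstep ⟨m, hm⟩, hstep' ⟨m, hm⟩, ih (by omega) fun j hj => hξ j (by omega),
      hξ ⟨m, hm⟩ (by simp)]

variable {L M MG α γ c : ℝ} {T : Finset 𝒟} {wstar : H}
  (hL : 0 ≤ L) (hγ : γ = α * (1 - α * L * MG / 2)) (hγ0 : 0 ≤ γ) (hc : 0 ≤ c)
  (hdiff : ∀ x, Differentiable ℝ (ℓ · x))
  (hLip : ∀ x w u, ‖∇ (ℓ · x) w - ∇ (ℓ · x) u‖ ≤ L * ‖w - u‖)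
  (hsecond : ∀ w, (T.card : ℝ)⁻¹ * ∑ x ∈ T, ‖∇ (ℓ · x) w‖ ^ 2
    ≤ M + MG * ‖∇ (empLoss ℓ T) w‖ ^ 2)
  (hmin : ∀ w, empLoss ℓ T wstar ≤ empLoss ℓ T w)
  (hPL : ∀ w, 2 * c * (empLoss ℓ T w - empLoss ℓ T wstar) ≤ ‖∇ (empLoss ℓ T) w‖ ^ 2)
include hL hγ hγ0 hc hdiff hLip hsecond hmin hPL

theorem expect_empLoss_sub_smul_gradient_le (hT : T.Nonempty) (v : H) :
    𝔼 x ∈ T, empLoss ℓ T (v - α • ∇ (ℓ · x) v)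
      ≤ (1 - γ * c) * (empLoss ℓ T v - empLoss ℓ T wstar) + empLoss ℓ T wstar
        + α ^ 2 * L * M / 2 := by
  set F := empLoss ℓ T
  set G := ∇ F v
  set g : 𝒟 → H := fun x => ∇ (ℓ · x) v
  have hdescent : ∀ x ∈ T, F (v - α • g x) ≤ F v - α * ⟪G, g x⟫_ℝ + L / 2 * α ^ 2 * ‖g x‖ ^ 2 := by
    intro x _
    have h := le_add_inner_gradient_add_sq_norm (differentiable_empLoss hdiff T)
      (norm_gradient_empLoss_sub_le hL hdiff hLip T) v (v - α • g x)
    rw [sub_sub_cancel_left, inner_neg_right, real_inner_smul_right, norm_neg, norm_smul,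
      mul_pow, Real.norm_eq_abs, sq_abs] at h
    linarith
  have hmean : 𝔼 x ∈ T, ⟪G, g x⟫_ℝ = ‖G‖ ^ 2 := by
    rw [Finset.expect_eq_sum_div_card, ← inner_sum, div_eq_inv_mul, ← real_inner_smul_right,
      ← gradient_empLoss hdiff, real_inner_self_eq_norm_sq]
  have hsq : 𝔼 x ∈ T, ‖g x‖ ^ 2 ≤ M + MG * ‖G‖ ^ 2 := by
    rw [Finset.expect_eq_sum_div_card, div_eq_inv_mul]
    exact hsecond v
  have hstep : 𝔼 x ∈ T, F (v - α • g x) ≤ F v - γ * ‖G‖ ^ 2 + α ^ 2 * L * M / 2 :=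
    calc 𝔼 x ∈ T, F (v - α • g x)
        ≤ 𝔼 x ∈ T, (F v - α * ⟪G, g x⟫_ℝ + L / 2 * α ^ 2 * ‖g x‖ ^ 2) :=
          Finset.expect_le_expect hdescent
      _ = F v - α * ‖G‖ ^ 2 + L / 2 * α ^ 2 * 𝔼 x ∈ T, ‖g x‖ ^ 2 := by
          rw [Finset.expect_add_distrib, Finset.expect_sub_distrib, Finset.expect_const hT,
            ← Finset.mul_expect, ← Finset.mul_expect, hmean]
      _ ≤ F v - α * ‖G‖ ^ 2 + L / 2 * α ^ 2 * (M + MG * ‖G‖ ^ 2) := by gcongr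
      _ = F v - γ * ‖G‖ ^ 2 + α ^ 2 * L * M / 2 := by rw [hγ]; ring
  have hPLv : γ * c * (F v - F wstar) ≤ γ * ‖G‖ ^ 2 := by
    have := mul_le_mul_of_nonneg_left (hPL v) hγ0
    nlinarith [mul_nonneg (mul_nonneg hγ0 hc) (sub_nonneg.2 (hmin v))]
  linarith

variable {Ω : Type*} [Fintype Ω] [Nonempty Ω]

theorem expect_empLoss_sgd_step_le
    (κ : Coord Ω T) (cur next : Ω → H) (hcur : ∀ ω t, cur (κ.put ω t) = cur ω)
    (hnext : ∀ ω, next ω = cur ω - α • ∇ (ℓ · (κ.get ω)) (cur ω)) :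
    𝔼 ω, empLoss ℓ T (next ω)
      ≤ (1 - γ * c) * (𝔼 ω, empLoss ℓ T (cur ω) - empLoss ℓ T wstar) + empLoss ℓ T wstar
        + α ^ 2 * L * M / 2 := by
  have hT : T.Nonempty := ⟨_, (κ.get (Classical.arbitrary Ω)).2⟩
  calc 𝔼 ω, empLoss ℓ T (next ω)
      = 𝔼 ω, 𝔼 x ∈ T, empLoss ℓ T (cur ω - α • ∇ (ℓ · x) (cur ω)) := by
        rw [κ.expect_eq_expect_put]
        refine Finset.expect_congr rfl fun ω _ => ?_
        simp only [hnext, hcur, Coord.get_put]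
        exact Finset.expect_coe_sort T fun x => empLoss ℓ T (cur ω - α • ∇ (ℓ · x) (cur ω))
    _ ≤ 𝔼 ω, ((1 - γ * c) * (empLoss ℓ T (cur ω) - empLoss ℓ T wstar) + empLoss ℓ T wstar
          + α ^ 2 * L * M / 2) :=
        Finset.expect_le_expect fun ω _ =>
          expect_empLoss_sub_smul_gradient_le hL hγ hγ0 hc hdiff hLip hsecond hmin hPL hT (cur ω)
    _ = _ := by
        rw [Finset.expect_add_distrib, Finset.expect_add_distrib, ← Finset.mul_expect,
          Finset.expect_sub_distrib, Fintype.expect_const, Fintype.expect_const]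

theorem expect_empLoss_sgd_iterate_le (hγc : γ * c ≠ 0) (hγc1 : γ * c ≤ 1)
    {n : ℕ} (κ : Fin n → Coord Ω T) (w : Ω → ℕ → H)
    (hpast : ∀ (j : Fin n) ω t, w ((κ j).put ω t) j = w ω j)
    (hstep : ∀ (j : Fin n) ω, w ω (j + 1) = w ω j - α • ∇ (ℓ · ((κ j).get ω)) (w ω j)) :
    𝔼 ω, empLoss ℓ T (w ω n) - empLoss ℓ T wstar - α ^ 2 * L * M / (2 * γ * c)
      ≤ (1 - γ * c) ^ n * (𝔼 ω, empLoss ℓ T (w ω 0) - empLoss ℓ T wstar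
        - α ^ 2 * L * M / (2 * γ * c)) := by
  set A := α ^ 2 * L * M / (2 * γ * c) with hA
  -- `A` is the fixed point of `x ↦ (1 - γc) x + α²LM/2`
  have hfix : (1 - γ * c) * A + α ^ 2 * L * M / 2 = A := by
    rw [hA]
    have := left_ne_zero_of_mul hγc
    have := right_ne_zero_of_mul hγc
    field_simp
    ring
  suffices ∀ m ≤ n, 𝔼 ω, empLoss ℓ T (w ω m) - empLoss ℓ T wstar - A
      ≤ (1 - γ * c) ^ m * (𝔼 ω, empLoss ℓ T (w ω 0) - empLoss ℓ T wstar - A) from this n le_rfl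
  intro m hm
  induction m with
  | zero => simp
  | succ m ih =>
    have h := expect_empLoss_sgd_step_le hL hγ hγ0 hc hdiff hLip hsecond hmin hPL (κ ⟨m, hm⟩)
      (w · m) (w · (m + 1)) (hpast ⟨m, hm⟩) (hstep ⟨m, hm⟩)
    calc _ ≤ (1 - γ * c) * (𝔼 ω, empLoss ℓ T (w ω m) - empLoss ℓ T wstar - A) := by linarith
      _ ≤ (1 - γ * c) * ((1 - γ * c) ^ m * (𝔼 ω, empLoss ℓ T (w ω 0) - empLoss ℓ T wstar - A)) :=
        mul_le_mul_of_nonneg_left (ih (by omega)) (by linarith)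
      _ = _ := by ring

theorem expect_empLoss_sgd_fresh_samples_le [Nonempty T] (hγc : γ * c ≠ 0) (hγc1 : γ * c ≤ 1)
    {n : ℕ} (v₀ : Ω → H) (V : Ω × (Fin n → T) → ℕ → H) (hV0 : ∀ ω, V ω 0 = v₀ ω.1)
    (hVstep : ∀ ω (j : Fin n), V ω (j + 1) = V ω j - α • ∇ (ℓ · (ω.2 j : 𝒟)) (V ω j)) :
    𝔼 ω, empLoss ℓ T (V ω n) - empLoss ℓ T wstar - α ^ 2 * L * M / (2 * γ * c)
      ≤ (1 - γ * c) ^ n * (𝔼 ω, empLoss ℓ T (v₀ ω) - empLoss ℓ T wstar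
        - α ^ 2 * L * M / (2 * γ * c)) := by
  have hpast : ∀ (j : Fin n) ω t, V ((Coord.snd.comp (Coord.pi j)).put ω t) j = V ω j :=
    fun j ω t => sgd_iterates_eq (hVstep _) (hVstep ω) (by rw [hV0, hV0]; rfl) j.2.le
      fun k hk => by
        simp [Coord.comp, Coord.snd, Coord.pi, Function.update_of_ne (Fin.ne_of_val_ne hk.ne)]
  have h := expect_empLoss_sgd_iterate_le hL hγ hγ0 hc hdiff hLip hsecond hmin hPL hγc hγc1
    (fun j => Coord.snd.comp (Coord.pi j)) V hpast fun j ω => hVstep ω j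
  have hfst : 𝔼 ω : Ω × (Fin n → T), empLoss ℓ T (v₀ ω.1) = 𝔼 ω, empLoss ℓ T (v₀ ω) := by
    rw [← Finset.univ_product_univ, Finset.expect_product]
    simp only [Fintype.expect_const]
  simpa only [hV0, hfst] using h

end SGD

theorem card_mul_empLoss {H 𝒟 : Type*} (ℓ : H → 𝒟 → ℝ) (S : Finset 𝒟) (w : H) :
    (S.card : ℝ) * empLoss ℓ S w = ∑ x ∈ S, ℓ w x := by
  rcases S.eq_empty_or_nonempty with rfl | hS
  · simp
  · rw [empLoss, mul_inv_cancel_left₀ (by simp [hS.card_pos.ne'])]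

section AvailSet

variable {𝒟 : Type*} [DecidableEq 𝒟] {X : ℕ → Finset 𝒟} {Bd : ℕ}

theorem availSet_add_two (X : ℕ → Finset 𝒟) (b : ℕ) :
    availSet X (b + 2) = availSet X (b + 1) ∪ X (b + 1) := by
  show (Icc 1 (b + 1)).biUnion X = (Icc 1 b).biUnion X ∪ X (b + 1)
  rw [← Finset.insert_Icc_right_eq_Icc_add_one (by omega), Finset.biUnion_insert,
    Finset.union_comm]

theorem availSet_nonempty {nc : ℕ} (hcard : ∀ i, 1 ≤ i → i ≤ Bd → (X i).card = nc)
    (hnc : 0 < nc) (hBd : 1 ≤ Bd) {b : ℕ} (hb : 2 ≤ b) : (availSet X b).Nonempty :=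
  (Finset.card_pos.1 (by rw [hcard 1 le_rfl hBd]; exact hnc)).mono
    (Finset.subset_biUnion_of_mem X (by simp; omega))

theorem disjoint_availSet
    (hdisj : ∀ i j, 1 ≤ i → i ≤ Bd → 1 ≤ j → j ≤ Bd → i ≠ j → Disjoint (X i) (X j))
    {b : ℕ} (hb : 1 ≤ b) (hbBd : b ≤ Bd) : Disjoint (availSet X b) (X b) := by
  rw [availSet, Finset.disjoint_biUnion_left]
  intro i hi
  rw [Finset.mem_Icc] at hi
  exact hdisj i b hi.1 (by omega) hb hbBd (by omega)

theorem card_availSet {nc : ℕ} (hcard : ∀ i, 1 ≤ i → i ≤ Bd → (X i).card = nc)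
    (hdisj : ∀ i j, 1 ≤ i → i ≤ Bd → 1 ≤ j → j ≤ Bd → i ≠ j → Disjoint (X i) (X j))
    {b : ℕ} (hb : b ≤ Bd + 1) : (availSet X b).card = (b - 1) * nc := by
  have hmem : ∀ i ∈ Icc 1 (b - 1), 1 ≤ i ∧ i ≤ Bd := fun i hi => by
    rw [Finset.mem_Icc] at hi
    omega
  rw [availSet, Finset.card_biUnion fun i hi j hj hij =>
      hdisj i j (hmem i hi).1 (hmem i hi).2 (hmem j hj).1 (hmem j hj).2 hij,
    Finset.sum_congr rfl fun i hi => hcard i (hmem i hi).1 (hmem i hi).2, Finset.sum_const,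
    Nat.card_Icc, smul_eq_mul, Nat.add_sub_cancel]

theorem natCast_mul_empLoss_availSet {H : Type*} {nc : ℕ} (hnc : 0 < nc)
    (hcard : ∀ i, 1 ≤ i → i ≤ Bd → (X i).card = nc)
    (hdisj : ∀ i j, 1 ≤ i → i ≤ Bd → 1 ≤ j → j ≤ Bd → i ≠ j → Disjoint (X i) (X j))
    {b : ℕ} (hb : b + 1 ≤ Bd) (ℓ : H → 𝒟 → ℝ) (w : H) :
    ((b + 1 : ℕ) : ℝ) * empLoss ℓ (availSet X (b + 2)) w
      = b * empLoss ℓ (availSet X (b + 1)) w + empLoss ℓ (X (b + 1)) w := by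
  have hsplit : ∑ x ∈ availSet X (b + 2), ℓ w x
      = ∑ x ∈ availSet X (b + 1), ℓ w x + ∑ x ∈ X (b + 1), ℓ w x := by
    rw [availSet_add_two, Finset.sum_union (disjoint_availSet hdisj (by omega) hb)]
  rw [← card_mul_empLoss, ← card_mul_empLoss, ← card_mul_empLoss,
    card_availSet hcard hdisj (by omega), card_availSet hcard hdisj (by omega),
    hcard (b + 1) (by omega) hb] at hsplit
  apply mul_left_cancel₀ (show (nc : ℝ) ≠ 0 by positivity)
  push_cast [Nat.add_sub_cancel] at hsplit ⊢
  linear_combination hsplit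

end AvailSet

section Pipeline

variable {H 𝒟 : Type*} [NormedAddCommGroup H] [InnerProductSpace ℝ H] [CompleteSpace H]
  {ℓ : H → 𝒟 → ℝ} [DecidableEq 𝒟] {X : ℕ → Finset 𝒟} {Bd np : ℕ} {α : ℝ} {winit : H}
  {W : SampleSpace X Bd np → ℕ → ℕ → H}
  (hW1 : ∀ ω, ∀ j ≤ np, W ω 1 j = winit)
  (hW0 : ∀ ω, ∀ b, 2 ≤ b → b ≤ Bd → W ω b 0 = W ω (b - 1) np)
  (hWstep : ∀ (ω : SampleSpace X Bd np) (i : Fin (Bd - 1)) (j : Fin np),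
    W ω (i.val + 2) (j.val + 1)
      = W ω (i.val + 2) j.val - α • ∇ (ℓ · (ω i j : 𝒟)) (W ω (i.val + 2) j.val))
include hW1 hW0 hWstep

theorem pipelined_iterates_eq {ω ω' : SampleSpace X Bd np} {b m : ℕ} (hb : 1 ≤ b)
    (hbBd : b ≤ Bd) (hm : m ≤ np)
    (hagree : ∀ (i : Fin (Bd - 1)) (k : Fin np),
      i.val + 2 < b ∨ (i.val + 2 = b ∧ k.val < m) → ω i k = ω' i k) :
    W ω b m = W ω' b m := by
  induction b, hb using Nat.le_induction generalizing m with
  | base => rw [hW1 ω m hm, hW1 ω' m hm]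
  | succ b hb ih =>
    obtain ⟨i, rfl⟩ : ∃ i : Fin (Bd - 1), b = i.val + 1 := ⟨⟨b - 1, by omega⟩, by simp; omega⟩
    refine sgd_iterates_eq (hWstep ω i) (hWstep ω' i) ?_ hm
      fun k hk => congrArg Subtype.val (hagree i k (Or.inr ⟨rfl, hk⟩))
    rw [hW0 ω _ (by omega) hbBd, hW0 ω' _ (by omega) hbBd]
    exact ih (by omega) le_rfl fun i' k hik => hagree i' k (Or.inl (by omega))

variable {L M MG γ c : ℝ} {wstar : H}
  (hL : 0 ≤ L) (hγ : γ = α * (1 - α * L * MG / 2)) (hγ0 : 0 ≤ γ) (hc : 0 ≤ c)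
  (hγc : γ * c ≠ 0) (hγc1 : γ * c ≤ 1)
  (hdiff : ∀ x, Differentiable ℝ (ℓ · x))
  (hLip : ∀ x w u, ‖∇ (ℓ · x) w - ∇ (ℓ · x) u‖ ≤ L * ‖w - u‖)
  (hsecond : ∀ b, 2 ≤ b → b ≤ Bd + 1 → ∀ w : H,
    ((availSet X b).card : ℝ)⁻¹ * ∑ x ∈ availSet X b, ‖∇ (ℓ · x) w‖ ^ 2
      ≤ M + MG * ‖∇ (empLoss ℓ (availSet X b)) w‖ ^ 2)
  (hmin : ∀ b, 2 ≤ b → b ≤ Bd + 1 → ∀ w : H,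
    empLoss ℓ (availSet X b) wstar ≤ empLoss ℓ (availSet X b) w)
  (hPL : ∀ b, 2 ≤ b → b ≤ Bd + 1 → ∀ w : H,
    2 * c * (empLoss ℓ (availSet X b) w - empLoss ℓ (availSet X b) wstar)
      ≤ ‖∇ (empLoss ℓ (availSet X b)) w‖ ^ 2)
include hL hγ hγ0 hc hγc hγc1 hdiff hLip hsecond hmin hPL

theorem pipelined_block_excess_le [Nonempty (SampleSpace X Bd np)] {b : ℕ} (hb : 1 ≤ b)
    (hbBd : b + 1 ≤ Bd) :
    𝔼 ω, empLoss ℓ (availSet X (b + 1)) (W ω (b + 1) np)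
        - empLoss ℓ (availSet X (b + 1)) wstar - α ^ 2 * L * M / (2 * γ * c)
      ≤ (1 - γ * c) ^ np * (𝔼 ω, empLoss ℓ (availSet X (b + 1)) (W ω b np)
        - empLoss ℓ (availSet X (b + 1)) wstar - α ^ 2 * L * M / (2 * γ * c)) := by
  obtain ⟨i, rfl⟩ : ∃ i : Fin (Bd - 1), b = i.val + 1 := ⟨⟨b - 1, by omega⟩, by simp; omega⟩
  have h := expect_empLoss_sgd_iterate_le (Ω := SampleSpace X Bd np) hL hγ hγ0 hc hdiff hLip
    (hsecond _ (by omega) (by omega)) (hmin _ (by omega) (by omega))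
    (hPL _ (by omega) (by omega)) hγc hγc1
    (fun j => (Coord.pi i).comp (Coord.pi j))
    (fun ω m => W ω (i.val + 2) m)
    (fun j ω t => pipelined_iterates_eq hW1 hW0 hWstep (by omega) (by omega) j.2.le
      fun i' k hik => Coord.pi_comp_pi_put_of_ne ω t (by omega))
    (fun j ω => hWstep ω i j)
  have h0 : ∀ ω, W ω (i.val + 2) 0 = W ω (i.val + 1) np :=
    fun ω => hW0 ω _ (by omega) (by omega)
  rwa [Finset.expect_congr rfl fun ω _ => congrArg (empLoss ℓ _) (h0 ω)] at h

variable {D : ℝ} {nc : ℕ} {u : ℕ → H}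
  (hnc : 0 < nc) (hcard : ∀ i, 1 ≤ i → i ≤ Bd → (X i).card = nc)
  (hdisj : ∀ i j, 1 ≤ i → i ≤ Bd → 1 ≤ j → j ≤ Bd → i ≠ j → Disjoint (X i) (X j))
  (hu : ∀ b, 1 ≤ b → b ≤ Bd →
    ∇ (empLoss ℓ (X b)) (u b) = 0 ∧ ∀ w, empLoss ℓ (X b) (u b) ≤ empLoss ℓ (X b) w)
  (hinit : ‖winit - wstar‖ ≤ D) (hWu : ∀ ω b, 1 ≤ b → b ≤ Bd → ‖W ω b np - u b‖ ≤ D)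
include hnc hcard hdisj hu hinit hWu

theorem pipelined_excess_le [Nonempty (SampleSpace X Bd np)]
    {b : ℕ} (hb : 1 ≤ b) (hbBd : b ≤ Bd) :
    b * (𝔼 ω, empLoss ℓ (availSet X (b + 1)) (W ω b np) - empLoss ℓ (availSet X (b + 1)) wstar
        - α ^ 2 * L * M / (2 * γ * c))
      ≤ (∑ l ∈ range b, ((1 - γ * c) ^ np) ^ l)
        * (L * D ^ 2 / 2 - α ^ 2 * L * M / (2 * γ * c)) := by
  induction b, hb using Nat.le_induction with
  | base =>
    have h := le_add_of_gradient_eq_zero hL (differentiable_empLoss hdiff _)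
      (norm_gradient_empLoss_sub_le hL hdiff hLip _)
      (gradient_eq_zero_of_forall_le (hmin 2 le_rfl (by omega))) hinit
    simp only [hW1 _ np le_rfl, Fintype.expect_const, Nat.cast_one, one_mul, range_one,
      sum_singleton, pow_zero]
    linarith
  | succ b hb ih =>
    have hdec : ((b + 1 : ℕ) : ℝ) * (𝔼 ω, empLoss ℓ (availSet X (b + 2)) (W ω (b + 1) np)
          - empLoss ℓ (availSet X (b + 2)) wstar)
        = b * (𝔼 ω, empLoss ℓ (availSet X (b + 1)) (W ω (b + 1) np)
            - empLoss ℓ (availSet X (b + 1)) wstar)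
          + (𝔼 ω, empLoss ℓ (X (b + 1)) (W ω (b + 1) np) - empLoss ℓ (X (b + 1)) wstar) := by
      simp only [mul_sub, Finset.mul_expect, natCast_mul_empLoss_availSet hnc hcard hdisj hbBd,
        Finset.expect_add_distrib]
      ring
    have hblock := mul_le_mul_of_nonneg_left (pipelined_block_excess_le hW1 hW0 hWstep hL hγ hγ0
      hc hγc hγc1 hdiff hLip hsecond hmin hPL hb hbBd) b.cast_nonneg
    have hprev := mul_le_mul_of_nonneg_left (ih (by omega)) (pow_nonneg (sub_nonneg.2 hγc1) np)
    have hcross := expect_sub_min_le_of_norm_sub_le hL (differentiable_empLoss hdiff _)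
      (norm_gradient_empLoss_sub_le hL hdiff hLip _) (hu (b + 1) (by omega) hbBd).2 _
      fun ω => hWu ω (b + 1) (by omega) hbBd
    have hu_le := (hu (b + 1) (by omega) hbBd).2 wstar
    rw [geom_sum_succ]
    push_cast at hdec ⊢
    linarith

theorem pipelined_final_excess_le [Nonempty (SampleSpace X Bd np)] [Nonempty (availSet X (Bd + 1))]
    (hBd : 1 ≤ Bd) {nl : ℕ} (V : SampleSpace X Bd np × (Fin nl → availSet X (Bd + 1)) → ℕ → H)
    (hV0 : ∀ ω, V ω 0 = W ω.1 Bd np)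
    (hVstep : ∀ ω (j : Fin nl), V ω (j + 1) = V ω j - α • ∇ (ℓ · (ω.2 j : 𝒟)) (V ω j)) :
    𝔼 ω, empLoss ℓ (availSet X (Bd + 1)) (V ω nl) - empLoss ℓ (availSet X (Bd + 1)) wstar
      ≤ α ^ 2 * L * M / (2 * γ * c) + 1 / (Bd : ℝ) * (1 - γ * c) ^ nl
        * ∑ l ∈ range Bd,
          (1 - γ * c) ^ (l * np) * (L * D ^ 2 / 2 - α ^ 2 * L * M / (2 * γ * c)) := by
  have hblocks := pipelined_excess_le hW1 hW0 hWstep hL hγ hγ0 hc hγc hγc1 hdiff hLip hsecond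
    hmin hPL hnc hcard hdisj hu hinit hWu hBd le_rfl
  have hlast := expect_empLoss_sgd_fresh_samples_le hL hγ hγ0 hc hdiff hLip
    (hsecond _ (by omega) le_rfl) (hmin _ (by omega) le_rfl) (hPL _ (by omega) le_rfl)
    hγc hγc1 (fun ω => W ω Bd np) V hV0 hVstep
  rw [← le_div_iff₀' (by positivity)] at hblocks
  simp only [pow_mul', ← Finset.sum_mul]
  rw [← sub_le_iff_le_add']
  calc _ ≤ _ := hlast
    _ ≤ _ := mul_le_mul_of_nonneg_left hblocks (pow_nonneg (sub_nonneg.2 hγc1) nl)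
    _ = _ := by ring

end Pipeline

theorem corollary1_case2_general
    {H 𝒟 : Type*} [NormedAddCommGroup H] [InnerProductSpace ℝ H] [CompleteSpace H]
    [DecidableEq 𝒟]
    (ℓ : H → 𝒟 → ℝ) (L M MG α γ c D : ℝ)
    (hL : 0 < L)
    (hα : 0 < α) (hα2 : α ≤ 2 / (L * MG))
    (hγ : γ = α * (1 - α * L * MG / 2))
    (hc : 0 < c) (hγc : γ * c ≤ 1)
    (hdiff : ∀ x : 𝒟, Differentiable ℝ (fun w => ℓ w x))
    (hLip : ∀ (x : 𝒟) (w u : H),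
      ‖gradient (fun v => ℓ v x) w - gradient (fun v => ℓ v x) u‖ ≤ L * ‖w - u‖)
    (Bd nc np : ℕ) (hBd : 1 ≤ Bd) (hnc : 1 ≤ nc)
    (X : ℕ → Finset 𝒟)
    (hcard : ∀ i, 1 ≤ i → i ≤ Bd → (X i).card = nc)
    (hdisj : ∀ i j, 1 ≤ i → i ≤ Bd → 1 ≤ j → j ≤ Bd → i ≠ j → Disjoint (X i) (X j))
    (wstar winit : H)
    (hsecond : ∀ b, 2 ≤ b → b ≤ Bd + 1 → ∀ w : H,
      ((availSet X b).card : ℝ)⁻¹ * ∑ x ∈ availSet X b, ‖gradient (fun v => ℓ v x) w‖ ^ 2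
        ≤ M + MG * ‖gradient (empLoss ℓ (availSet X b)) w‖ ^ 2)
    (hmin : ∀ b, 2 ≤ b → b ≤ Bd + 1 → ∀ w : H,
      empLoss ℓ (availSet X b) wstar ≤ empLoss ℓ (availSet X b) w)
    (hPL : ∀ b, 2 ≤ b → b ≤ Bd + 1 → ∀ w : H,
      2 * c * (empLoss ℓ (availSet X b) w - empLoss ℓ (availSet X b) wstar)
        ≤ ‖gradient (empLoss ℓ (availSet X b)) w‖ ^ 2)
    -- the random iterates of the pipelined blocks:
    -- `W ω b j` is the iterate `w_b^j` under realization `ω`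
    (W : SampleSpace X Bd np → ℕ → ℕ → H)
    (hW1 : ∀ ω, ∀ j ≤ np, W ω 1 j = winit)
    (hW0 : ∀ ω, ∀ b, 2 ≤ b → b ≤ Bd → W ω b 0 = W ω (b - 1) np)
    (hWstep : ∀ (ω : SampleSpace X Bd np) (i : Fin (Bd - 1)) (j : Fin np),
      W ω (i.val + 2) (j.val + 1)
        = W ω (i.val + 2) j.val
          - α • gradient (fun v => ℓ v (ω i j : 𝒟)) (W ω (i.val + 2) j.val))
    -- the final block: `n_l` further updates with fresh i.i.d. uniform samples from `𝒳`
    (nl : ℕ)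
    (V : SampleSpace X Bd np × (Fin nl → {x // x ∈ availSet X (Bd + 1)}) → ℕ → H)
    (hV0 : ∀ ω, V ω 0 = W ω.1 Bd np)
    (hVstep : ∀ (ω : SampleSpace X Bd np × (Fin nl → {x // x ∈ availSet X (Bd + 1)}))
        (j : Fin nl),
      V ω (j.val + 1)
        = V ω j.val - α • gradient (fun v => ℓ v (ω.2 j : 𝒟)) (V ω j.val))
    -- boundedness assumption: stationary global minimizers of the per-block losses
    -- `ℒ_b`, and a diameter bound `D` on all relevant points
    (u : ℕ → H)
    (hu : ∀ b, 1 ≤ b → b ≤ Bd →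
      gradient (empLoss ℓ (X b)) (u b) = 0
        ∧ ∀ w : H, empLoss ℓ (X b) (u b) ≤ empLoss ℓ (X b) w)
    (hdiam : ∀ (ω : SampleSpace X Bd np × (Fin nl → {x // x ∈ availSet X (Bd + 1)}))
        (p q : H),
      (p = wstar ∨ (∃ b, 1 ≤ b ∧ b ≤ Bd ∧ p = u b)
          ∨ (∃ b j, 1 ≤ b ∧ b ≤ Bd ∧ j ≤ np ∧ p = W ω.1 b j)
          ∨ (∃ j, j ≤ nl ∧ p = V ω j)) →
      (q = wstar ∨ (∃ b, 1 ≤ b ∧ b ≤ Bd ∧ q = u b)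
          ∨ (∃ b j, 1 ≤ b ∧ b ≤ Bd ∧ j ≤ np ∧ q = W ω.1 b j)
          ∨ (∃ j, j ≤ nl ∧ q = V ω j)) →
      ‖p - q‖ ≤ D) :
    unifExp (fun ω : SampleSpace X Bd np × (Fin nl → {x // x ∈ availSet X (Bd + 1)}) =>
        empLoss ℓ (availSet X (Bd + 1)) (V ω nl))
        - empLoss ℓ (availSet X (Bd + 1)) wstar
      ≤ α ^ 2 * L * M / (2 * γ * c)
        + (1 / (Bd : ℝ)) * (1 - γ * c) ^ nl
          * ∑ l ∈ Finset.range Bd,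
              (1 - γ * c) ^ (l * np)
                * (L * D ^ 2 / 2 - α ^ 2 * L * M / (2 * γ * c)) := by
  have hγ0 := sgd_gamma_nonneg hα hα2 hγ
  have hne : ∀ b, 2 ≤ b → (availSet X b).Nonempty := fun _ => availSet_nonempty hcard hnc hBd
  have : Nonempty (SampleSpace X Bd np) := ⟨fun i _ => (hne _ (by omega)).coe_sort.some⟩
  have : Nonempty (availSet X (Bd + 1)) := (hne _ (by omega)).coe_sort
  obtain ⟨ω₀⟩ : Nonempty (SampleSpace X Bd np × (Fin nl → availSet X (Bd + 1))) := inferInstance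
  have hinit : ‖winit - wstar‖ ≤ D := by
    simpa only [hW1 _ np le_rfl] using hdiam ω₀ (W ω₀.1 1 np) wstar
      (Or.inr (Or.inr (Or.inl ⟨1, np, le_rfl, hBd, le_rfl, rfl⟩))) (Or.inl rfl)
  have hWu : ∀ ω b, 1 ≤ b → b ≤ Bd → ‖W ω b np - u b‖ ≤ D := fun ω b hb hbBd =>
    hdiam (ω, ω₀.2) _ _ (Or.inr (Or.inr (Or.inl ⟨b, np, hb, hbBd, le_rfl, rfl⟩)))
      (Or.inr (Or.inl ⟨b, hb, hbBd, rfl⟩))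
  rw [unifExp_eq_expect]
  rcases (mul_nonneg hγ0 hc.le).eq_or_lt with hγc0 | hγc0
  · -- `α²LM/(2γc)` is `α²LM/0 = 0` here, and the claimed bound collapses to `LD²/2`
    have h2γc : 2 * γ * c = 0 := by rw [mul_assoc, ← hγc0, mul_zero]
    simp only [← hγc0, h2γc, div_zero, sub_zero, one_pow, one_mul, Finset.sum_const,
      Finset.card_range, nsmul_eq_mul, zero_add, mul_one, one_div]
    rw [inv_mul_cancel_left₀ (by positivity)]
    exact expect_sub_min_le_of_norm_sub_le hL.le (differentiable_empLoss hdiff _)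
      (norm_gradient_empLoss_sub_le hL.le hdiff hLip _) (hmin _ (by omega) le_rfl) _
      fun ω => hdiam ω _ _ (Or.inr (Or.inr (Or.inr ⟨nl, le_rfl, rfl⟩))) (Or.inl rfl)
  exact pipelined_final_excess_le hW1 hW0 hWstep hL.le hγ hγ0 hc.le hγc0.ne' hγc hdiff hLip
    hsecond hmin hPL hnc hcard hdisj hu hinit hWu hBd V hV0 hVstep

/-- Corollary 1 of the paper, case `T > B_d(n_c+n_o)`. Under the
extra boundedness assumption — there are stationary global minimizers `u_b` of each
`ℒ_b`, and all iterates (including those of the final block) together with `w*` and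
the `u_b`'s pairwise lie within distance `D` of one another — after a final block of
`n_l ≥ 0` SGD updates with fresh i.i.d. uniform samples from `𝒳 = X̃_{B_d+1}`,
`E[L(w_{B_l}^{n_l})] − L(w*) ≤ α²LM/(2γc)
 + (1/B_d)(1−γc)^{n_l} ∑_{l=0}^{B_d−1} (1−γc)^{l n_p} (LD²/2 − α²LM/(2γc))`. -/
theorem corollary1_case2
    {H 𝒟 : Type*} [NormedAddCommGroup H] [InnerProductSpace ℝ H] [CompleteSpace H]
    [DecidableEq 𝒟]
    (ℓ : H → 𝒟 → ℝ) (L M MG α γ c D : ℝ)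
    (hL : 0 < L) (hM : 0 ≤ M) (hMG : 1 ≤ MG)
    (hα : 0 < α) (hα2 : α ≤ 2 / (L * MG))
    (hγ : γ = α * (1 - α * L * MG / 2))
    (hc : 0 < c) (hγc : γ * c ≤ 1) (hD : 0 < D)
    (hdiff : ∀ x : 𝒟, Differentiable ℝ (fun w => ℓ w x))
    (hLip : ∀ (x : 𝒟) (w u : H),
      ‖gradient (fun v => ℓ v x) w - gradient (fun v => ℓ v x) u‖ ≤ L * ‖w - u‖)
    (Bd nc np : ℕ) (hBd : 1 ≤ Bd) (hnc : 1 ≤ nc) (hnp : 1 ≤ np)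
    (X : ℕ → Finset 𝒟)
    (hcard : ∀ i, 1 ≤ i → i ≤ Bd → (X i).card = nc)
    (hdisj : ∀ i j, 1 ≤ i → i ≤ Bd → 1 ≤ j → j ≤ Bd → i ≠ j → Disjoint (X i) (X j))
    (wstar winit : H)
    (hsecond : ∀ b, 2 ≤ b → b ≤ Bd + 1 → ∀ w : H,
      ((availSet X b).card : ℝ)⁻¹ * ∑ x ∈ availSet X b, ‖gradient (fun v => ℓ v x) w‖ ^ 2
        ≤ M + MG * ‖gradient (empLoss ℓ (availSet X b)) w‖ ^ 2)
    (hmin : ∀ b, 2 ≤ b → b ≤ Bd + 1 → ∀ w : H,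
      empLoss ℓ (availSet X b) wstar ≤ empLoss ℓ (availSet X b) w)
    (hPL : ∀ b, 2 ≤ b → b ≤ Bd + 1 → ∀ w : H,
      2 * c * (empLoss ℓ (availSet X b) w - empLoss ℓ (availSet X b) wstar)
        ≤ ‖gradient (empLoss ℓ (availSet X b)) w‖ ^ 2)
    -- the random iterates of the pipelined blocks:
    -- `W ω b j` is the iterate `w_b^j` under realization `ω`
    (W : SampleSpace X Bd np → ℕ → ℕ → H)
    (hW1 : ∀ ω, ∀ j ≤ np, W ω 1 j = winit)
    (hW0 : ∀ ω, ∀ b, 2 ≤ b → b ≤ Bd → W ω b 0 = W ω (b - 1) np)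
    (hWstep : ∀ (ω : SampleSpace X Bd np) (i : Fin (Bd - 1)) (j : Fin np),
      W ω (i.val + 2) (j.val + 1)
        = W ω (i.val + 2) j.val
          - α • gradient (fun v => ℓ v (ω i j : 𝒟)) (W ω (i.val + 2) j.val))
    -- the final block: `n_l` further updates with fresh i.i.d. uniform samples from `𝒳`
    (nl : ℕ)
    (V : SampleSpace X Bd np × (Fin nl → {x // x ∈ availSet X (Bd + 1)}) → ℕ → H)
    (hV0 : ∀ ω, V ω 0 = W ω.1 Bd np)
    (hVstep : ∀ (ω : SampleSpace X Bd np × (Fin nl → {x // x ∈ availSet X (Bd + 1)}))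
        (j : Fin nl),
      V ω (j.val + 1)
        = V ω j.val - α • gradient (fun v => ℓ v (ω.2 j : 𝒟)) (V ω j.val))
    -- boundedness assumption: stationary global minimizers of the per-block losses
    -- `ℒ_b`, and a diameter bound `D` on all relevant points
    (u : ℕ → H)
    (hu : ∀ b, 1 ≤ b → b ≤ Bd →
      gradient (empLoss ℓ (X b)) (u b) = 0
        ∧ ∀ w : H, empLoss ℓ (X b) (u b) ≤ empLoss ℓ (X b) w)
    (hdiam : ∀ (ω : SampleSpace X Bd np × (Fin nl → {x // x ∈ availSet X (Bd + 1)}))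
        (p q : H),
      (p = wstar ∨ (∃ b, 1 ≤ b ∧ b ≤ Bd ∧ p = u b)
          ∨ (∃ b j, 1 ≤ b ∧ b ≤ Bd ∧ j ≤ np ∧ p = W ω.1 b j)
          ∨ (∃ j, j ≤ nl ∧ p = V ω j)) →
      (q = wstar ∨ (∃ b, 1 ≤ b ∧ b ≤ Bd ∧ q = u b)
          ∨ (∃ b j, 1 ≤ b ∧ b ≤ Bd ∧ j ≤ np ∧ q = W ω.1 b j)
          ∨ (∃ j, j ≤ nl ∧ q = V ω j)) →
      ‖p - q‖ ≤ D) :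
    unifExp (fun ω : SampleSpace X Bd np × (Fin nl → {x // x ∈ availSet X (Bd + 1)}) =>
        empLoss ℓ (availSet X (Bd + 1)) (V ω nl))
        - empLoss ℓ (availSet X (Bd + 1)) wstar
      ≤ α ^ 2 * L * M / (2 * γ * c)
        + (1 / (Bd : ℝ)) * (1 - γ * c) ^ nl
          * ∑ l ∈ Finset.range Bd,
              (1 - γ * c) ^ (l * np)
                * (L * D ^ 2 / 2 - α ^ 2 * L * M / (2 * γ * c)) :=
  corollary1_case2_general ℓ L M MG α γ c D hL hα hα2 hγ hc hγc hdiff hLip Bd nc np hBd hnc X hcard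
    hdisj wstar winit hsecond hmin hPL W hW1 hW0 hWstep nl V hV0 hVstep u hu hdiam
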